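/- arXiv:2504.15566 — 4 statements merged into one kernel-verified Lean document; each statement's English description precedes it below -/
import Mathlib

section
/- Let N ≥ 1 be an integer, h = 1/N, t_n = n/N, and let γ : [0,1] → R^D be a C² curve with square-integrable second derivative. Define the finite difference β(t_n) = (γ(t_{n+1}) − γ(t_n))/h. Then for every t ∈ [t_n, t_{n+1}], ‖β(t_n) − γ'(t)‖₂ ≤ 2 N^{−1/2} ‖γ''‖_{L²([t_n,t_{n+1}])}. -/
open MeasureTheory

/-- Error between the finite difference `β(tₙ) = N (γ(t_{n+1}) - γ(tₙ))` and the derivative: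
for a `C²` curve `γ : [0,1] → ℝ^D` with square-integrable second derivative, for every
`t ∈ [tₙ, t_{n+1}]` (where `tₙ = n/N`),
`‖β(tₙ) - γ'(t)‖ ≤ 2 N^{-1/2} ‖γ''‖_{L²([tₙ, t_{n+1}])}`. -/
theorem finite_difference_deriv_error (D N : ℕ) (hN : 1 ≤ N)
    (γ : ℝ → EuclideanSpace ℝ (Fin D)) (hγ : ContDiff ℝ 2 γ)
    (hint : IntervalIntegrable (fun t => ‖deriv (deriv γ) t‖ ^ 2) volume 0 1)
    (n : ℕ) (hn : n < N) (t : ℝ)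
    (ht : t ∈ Set.Icc ((n : ℝ) / N) (((n : ℝ) + 1) / N)) :
    ‖(N : ℝ) • (γ (((n : ℝ) + 1) / N) - γ ((n : ℝ) / N)) - deriv γ t‖ ≤
      2 * (N : ℝ) ^ (-(1 : ℝ) / 2) *
        Real.sqrt (∫ u in ((n : ℝ) / N)..(((n : ℝ) + 1) / N), ‖deriv (deriv γ) u‖ ^ 2) := by
  have hN0 : (0:ℝ) < N := by exact_mod_cast hN
  set a : ℝ := (n : ℝ) / N with ha
  set b : ℝ := ((n : ℝ) + 1) / N with hb
  have hab : a ≤ b := by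
    rw [ha, hb]; gcongr; linarith
  have hba : b - a = 1 / N := by
    rw [ha, hb]; field_simp; ring
  have ha0 : 0 ≤ a := by positivity
  have hb1 : b ≤ 1 := by
    rw [hb, div_le_one hN0]
    have : (n : ℝ) + 1 ≤ N := by exact_mod_cast hn
    linarith
  -- smoothness facts
  have hγdiff : Differentiable ℝ γ := hγ.differentiable two_ne_zero
  have hγ'cd : ContDiff ℝ 1 (deriv γ) := by
    have h2 : ContDiff ℝ ((1 : WithTop ℕ∞) + 1) γ := by
      have : ((1 : WithTop ℕ∞) + 1) = 2 := by norm_num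
      rw [this]; exact hγ
    exact (contDiff_succ_iff_deriv.mp h2).2.2
  have hγ'diff : Differentiable ℝ (deriv γ) := hγ'cd.differentiable one_ne_zero
  have hγ'cont : Continuous (deriv γ) := hγ'diff.continuous
  have hγ''cont : Continuous (deriv (deriv γ)) := hγ'cd.continuous_deriv le_rfl
  -- FTC
  have ftc1 : ∫ s in a..b, deriv γ s = γ b - γ a :=
    intervalIntegral.integral_deriv_eq_sub (fun x _ => hγdiff x)
      (hγ'cont.intervalIntegrable a b)
  have ftc2 : ∀ s : ℝ, ∫ u in t..s, deriv (deriv γ) u = deriv γ s - deriv γ t := fun s =>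
    intervalIntegral.integral_deriv_eq_sub (fun x _ => hγ'diff x)
      (hγ''cont.intervalIntegrable t s)
  set I : ℝ := ∫ u in a..b, ‖deriv (deriv γ) u‖ ^ 2 with hI
  have hI0 : 0 ≤ I := by
    rw [hI]
    exact intervalIntegral.integral_nonneg hab (fun u _ => sq_nonneg _)
  set C : ℝ := Real.sqrt (1 / N) * Real.sqrt I with hC
  have hC0 : 0 ≤ C := mul_nonneg (Real.sqrt_nonneg _) (Real.sqrt_nonneg _)
  -- Cauchy–Schwarz
  have hCS : (∫ u in a..b, ‖deriv (deriv γ) u‖) ≤ C := by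
    rw [intervalIntegral.integral_of_le hab]
    set μ : Measure ℝ := volume.restrict (Set.Ioc a b) with hμ
    haveI : IsFiniteMeasure μ := ⟨by
      rw [hμ, Measure.restrict_apply_univ]; exact measure_Ioc_lt_top⟩
    have h22 : (2:ℝ).HolderConjugate 2 := Real.holderConjugate_iff.mpr ⟨one_lt_two, by norm_num⟩
    have hof : ENNReal.ofReal (2:ℝ) = 2 := by norm_num
    have hf2 : MemLp (fun _ : ℝ => (1:ℝ)) (ENNReal.ofReal (2:ℝ)) μ := by
      rw [hof]; exact memLp_const 1
    have hg2' : MemLp (deriv (deriv γ)) (2 : ENNReal) μ := by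
      refine (memLp_two_iff_integrable_sq_norm
        hγ''cont.aestronglyMeasurable.restrict).mpr ?_
      have hsub : Set.Ioc a b ⊆ Set.Ioc (0:ℝ) 1 := Set.Ioc_subset_Ioc ha0 hb1
      exact (hint.1.mono_set hsub)
    have hg2 : MemLp (fun u => ‖deriv (deriv γ) u‖) (ENNReal.ofReal (2:ℝ)) μ := by
      rw [hof]; exact hg2'.norm
    have key := integral_mul_norm_le_Lp_mul_Lq (μ := μ) h22 hf2 hg2
    simp only [norm_one, one_mul, Real.one_rpow, norm_norm] at key
    have h1 : (∫ _ : ℝ, (1:ℝ) ∂μ) = b - a := by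
      rw [integral_const, smul_eq_mul, mul_one, hμ, measureReal_def, Measure.restrict_apply_univ,
        Real.volume_Ioc, ENNReal.toReal_ofReal (by linarith)]
    have h2 : (∫ u, ‖deriv (deriv γ) u‖ ^ (2:ℝ) ∂μ) = I := by
      rw [hI, intervalIntegral.integral_of_le hab]
      exact integral_congr_ae (Filter.Eventually.of_forall fun u => Real.rpow_two _)
    rw [h1, h2] at key
    calc (∫ u, ‖deriv (deriv γ) u‖ ∂μ) ≤ (b - a) ^ ((1:ℝ)/2) * I ^ ((1:ℝ)/2) := key
      _ = C := by
          rw [hC, hba, ← Real.sqrt_eq_rpow, ← Real.sqrt_eq_rpow]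
  -- pointwise bound on the derivative increment
  have hpt : ∀ s ∈ Set.uIoc a b, ‖deriv γ s - deriv γ t‖ ≤ C := by
    intro s hs
    rw [Set.uIoc_of_le hab] at hs
    rw [← ftc2 s]
    have hnormint : IntervalIntegrable (fun u => ‖deriv (deriv γ) u‖) volume a b :=
      (hγ''cont.norm).intervalIntegrable a b
    have hnonneg : 0 ≤ᵐ[volume.restrict (Set.Ioc a b)] fun u => ‖deriv (deriv γ) u‖ :=
      Filter.Eventually.of_forall fun u => norm_nonneg _
    rcases le_total t s with hts | hst
    · calc ‖∫ u in t..s, deriv (deriv γ) u‖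
          ≤ ∫ u in t..s, ‖deriv (deriv γ) u‖ :=
            intervalIntegral.norm_integral_le_integral_norm hts
        _ ≤ ∫ u in a..b, ‖deriv (deriv γ) u‖ :=
            intervalIntegral.integral_mono_interval ht.1 hts hs.2 hnonneg hnormint
        _ ≤ C := hCS
    · rw [intervalIntegral.integral_symm, norm_neg]
      calc ‖∫ u in s..t, deriv (deriv γ) u‖
          ≤ ∫ u in s..t, ‖deriv (deriv γ) u‖ :=
            intervalIntegral.norm_integral_le_integral_norm hst
        _ ≤ ∫ u in a..b, ‖deriv (deriv γ) u‖ :=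
            intervalIntegral.integral_mono_interval hs.1.le hst ht.2 hnonneg hnormint
        _ ≤ C := hCS
  -- rewrite the LHS
  have hsplit : (N : ℝ) • (γ b - γ a) - deriv γ t =
      (N : ℝ) • ∫ s in a..b, (deriv γ s - deriv γ t) := by
    have hone : (N : ℝ) • ((1 / (N:ℝ)) • deriv γ t) = deriv γ t := by
      rw [smul_smul, mul_one_div_cancel hN0.ne', one_smul]
    rw [intervalIntegral.integral_sub (hγ'cont.intervalIntegrable a b)
      (intervalIntegrable_const), intervalIntegral.integral_const, ftc1, hba,
      smul_sub ((N:ℝ)) (γ b - γ a) ((1 / (N:ℝ)) • deriv γ t), hone]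
  have hsqrtN : Real.sqrt (1 / N) = (N : ℝ) ^ (-(1:ℝ)/2) := by
    rw [one_div, Real.sqrt_inv, Real.sqrt_eq_rpow, neg_div, Real.rpow_neg hN0.le]
  calc ‖(N : ℝ) • (γ b - γ a) - deriv γ t‖
      = (N : ℝ) * ‖∫ s in a..b, (deriv γ s - deriv γ t)‖ := by
        rw [hsplit, norm_smul, Real.norm_eq_abs, abs_of_nonneg hN0.le]
    _ ≤ (N : ℝ) * (C * |b - a|) := by
        have := intervalIntegral.norm_integral_le_of_norm_le_const hpt
        exact mul_le_mul_of_nonneg_left this hN0.le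
    _ = C := by
        rw [hba, abs_of_nonneg (by positivity : (0:ℝ) ≤ 1 / N)]
        field_simp
    _ ≤ 2 * (N : ℝ) ^ (-(1:ℝ)/2) * Real.sqrt I := by
        rw [hC, hsqrtN]
        have h1 : (0:ℝ) ≤ (N : ℝ) ^ (-(1:ℝ)/2) * Real.sqrt I :=
          mul_nonneg (Real.rpow_nonneg hN0.le _) (Real.sqrt_nonneg _)
        nlinarith
end

section
/- Let g ∈ C¹ be a Riemannian metric on R^D with g_x(u,u) = u^⊤H(x)u, c₁‖u‖₂² ≤ g_x(u,u) for some c₁ > 0, and ‖H(x) − H(y)‖ ≤ L_H‖x − y‖₂ in operator norm. Then the Christoffel symbols of the Levi-Civita connection satisfy |Γ_{ij}^k(x)| ≤ 3 L_H D^{1/2} / (2 c₁) for all indices i, j, k and all x ∈ R^D. -/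
open scoped Matrix

attribute [local instance] Matrix.normedAddCommGroup Matrix.normedSpace

noncomputable section

/-- Partial derivative `∂g_{ij}/∂x_ℓ` of the metric components `g_{ij}(x) = H(x)_{ij}`. -/
def pdg {D : ℕ} (H : EuclideanSpace ℝ (Fin D) → Matrix (Fin D) (Fin D) ℝ)
    (i j ℓ : Fin D) (x : EuclideanSpace ℝ (Fin D)) : ℝ :=
  deriv (fun h : ℝ => H (x + h • EuclideanSpace.single ℓ 1) i j) 0

/-- The Christoffel symbols of the second kind of the Levi-Civita connection:
`Γ_{ij}^k = (1/2) Σ_ℓ g^{kℓ} (∂g_{ℓj}/∂xᵢ + ∂g_{iℓ}/∂xⱼ − ∂g_{ij}/∂x_ℓ)`. -/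
def christoffel {D : ℕ} (H : EuclideanSpace ℝ (Fin D) → Matrix (Fin D) (Fin D) ℝ)
    (k i j : Fin D) (x : EuclideanSpace ℝ (Fin D)) : ℝ :=
  (1 / 2) * ∑ ℓ, (H x)⁻¹ k ℓ * (pdg H ℓ j i x + pdg H i ℓ j x - pdg H i j ℓ x)

lemma entry_abs_le_opNorm {D : ℕ} (A : Matrix (Fin D) (Fin D) ℝ) (i j : Fin D) :
    |A i j| ≤ ‖Matrix.toEuclideanCLM (𝕜 := ℝ) A‖ := by
  set v : EuclideanSpace ℝ (Fin D) := EuclideanSpace.single j 1 with hv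
  have h1 : Matrix.toEuclideanCLM (𝕜 := ℝ) A v =
      (WithLp.equiv 2 _).symm (A.mulVec (Pi.single j 1)) := by
    rw [hv]
    exact Matrix.toEuclideanCLM_toLp A (Pi.single j 1)
  have h2 : |A i j| ≤ ‖Matrix.toEuclideanCLM (𝕜 := ℝ) A v‖ := by
    rw [h1]
    have := EuclideanSpace.norm_eq ((WithLp.equiv 2 (Fin D → ℝ)).symm (A.mulVec (Pi.single j 1)))
    rw [this]
    rw [← Real.sqrt_sq_eq_abs]
    apply Real.sqrt_le_sqrt
    have : ((WithLp.equiv 2 (Fin D → ℝ)).symm (A.mulVec (Pi.single j 1))) i = A i j := by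
      simp [Matrix.mulVec_single]
    calc (A i j) ^ 2 = ‖((WithLp.equiv 2 (Fin D → ℝ)).symm (A.mulVec (Pi.single j 1))) i‖ ^ 2 := by
          rw [this]; rw [Real.norm_eq_abs, sq_abs]
      _ ≤ _ := Finset.single_le_sum (f := fun i => ‖((WithLp.equiv 2 (Fin D → ℝ)).symm (A.mulVec (Pi.single j 1))) i‖ ^ 2) (fun _ _ => sq_nonneg _) (Finset.mem_univ i)
  calc |A i j| ≤ ‖Matrix.toEuclideanCLM (𝕜 := ℝ) A v‖ := h2
    _ ≤ ‖Matrix.toEuclideanCLM (𝕜 := ℝ) A‖ * ‖v‖ := (Matrix.toEuclideanCLM (𝕜 := ℝ) A).le_opNorm v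
    _ = ‖Matrix.toEuclideanCLM (𝕜 := ℝ) A‖ := by
        rw [hv, EuclideanSpace.norm_single, norm_one, mul_one]

lemma pdg_abs_le {D : ℕ} (H : EuclideanSpace ℝ (Fin D) → Matrix (Fin D) (Fin D) ℝ)
    (L_H : ℝ) (hLH : 0 < L_H)
    (hlip : ∀ x y,
      ‖Matrix.toEuclideanCLM (𝕜 := ℝ) (H x) - Matrix.toEuclideanCLM (𝕜 := ℝ) (H y)‖
        ≤ L_H * ‖x - y‖)
    (i j ℓ : Fin D) (x : EuclideanSpace ℝ (Fin D)) :
    |pdg H i j ℓ x| ≤ L_H := by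
  set f : ℝ → ℝ := fun h => H (x + h • EuclideanSpace.single ℓ 1) i j with hf
  have hd : |deriv f 0| ≤ ‖fderiv ℝ f 0‖ := by
    rw [← fderiv_apply_one_eq_deriv]
    calc |(fderiv ℝ f 0) 1| = ‖(fderiv ℝ f 0) 1‖ := (Real.norm_eq_abs _).symm
      _ ≤ ‖fderiv ℝ f 0‖ * ‖(1 : ℝ)‖ := (fderiv ℝ f 0).le_opNorm 1
      _ = ‖fderiv ℝ f 0‖ := by simp
  refine hd.trans ?_
  apply norm_fderiv_le_of_lip' ℝ hLH.le
  filter_upwards with t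
  have key : ∀ a b : EuclideanSpace ℝ (Fin D), |H a i j - H b i j| ≤ L_H * ‖a - b‖ := by
    intro a b
    have : H a i j - H b i j = (H a - H b) i j := by simp [Matrix.sub_apply]
    rw [this]
    calc |(H a - H b) i j| ≤ ‖Matrix.toEuclideanCLM (𝕜 := ℝ) (H a - H b)‖ :=
          entry_abs_le_opNorm _ i j
      _ = ‖Matrix.toEuclideanCLM (𝕜 := ℝ) (H a) - Matrix.toEuclideanCLM (𝕜 := ℝ) (H b)‖ := by
          rw [map_sub]
      _ ≤ L_H * ‖a - b‖ := hlip a b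
  have := key (x + t • EuclideanSpace.single ℓ 1) (x + (0:ℝ) • EuclideanSpace.single ℓ 1)
  simp only [hf, Real.norm_eq_abs]
  calc |f t - f 0| ≤ L_H * ‖(x + t • EuclideanSpace.single ℓ 1) -
        (x + (0:ℝ) • EuclideanSpace.single ℓ 1)‖ := by
        simpa [hf] using this
    _ = L_H * |t - 0| := by
        congr 1
        have : (x + t • EuclideanSpace.single ℓ 1) - (x + (0:ℝ) • EuclideanSpace.single ℓ 1)
            = (t - 0) • (EuclideanSpace.single ℓ (1:ℝ)) := by
          rw [sub_smul]; abel
        rw [this, norm_smul, EuclideanSpace.norm_single, norm_one, mul_one, Real.norm_eq_abs]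

/-- Bound on the Christoffel symbols: if the `C¹` metric `g_x(u,u) = uᵀH(x)u` on `ℝ^D`
satisfies `c₁‖u‖² ≤ g_x(u,u)` and is `L_H`-Lipschitz in the operator norm, then
`|Γ_{ij}^k(x)| ≤ 3 L_H D^{1/2} / (2 c₁)`. -/
theorem christoffel_bound (D : ℕ)
    (H : EuclideanSpace ℝ (Fin D) → Matrix (Fin D) (Fin D) ℝ)
    (c₁ L_H : ℝ) (hc₁ : 0 < c₁) (hLH : 0 < L_H)
    (hC1 : ContDiff ℝ 1 H)
    (hsymm : ∀ x, (H x).IsSymm)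
    (hlow : ∀ (x : EuclideanSpace ℝ (Fin D)) (u : Fin D → ℝ),
      c₁ * ∑ i, u i ^ 2 ≤ u ⬝ᵥ (H x).mulVec u)
    (hlip : ∀ x y,
      ‖Matrix.toEuclideanCLM (𝕜 := ℝ) (H x) - Matrix.toEuclideanCLM (𝕜 := ℝ) (H y)‖
        ≤ L_H * ‖x - y‖)
    (k i j : Fin D) (x : EuclideanSpace ℝ (Fin D)) :
    |christoffel H k i j x| ≤ 3 * L_H * Real.sqrt D / (2 * c₁) := by
  set A := H x with hA
  -- A is positive definite
  have hpd : A.PosDef := by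
    refine Matrix.PosDef.of_dotProduct_mulVec_pos ?_ (fun u hu => ?_)
    · rw [Matrix.IsHermitian]
      have := hsymm x
      rw [Matrix.IsSymm] at this
      simpa [Matrix.conjTranspose, Matrix.transpose, hA, Matrix.map, starRingEnd_apply, star_trivial] using this
    · have hpos : 0 < ∑ l, u l ^ 2 := by
        rcases Function.ne_iff.1 hu with ⟨l, hl⟩
        apply Finset.sum_pos' (fun _ _ => sq_nonneg _)
        exact ⟨l, Finset.mem_univ l, by simpa using sq_pos_of_ne_zero hl⟩
      have := hlow x u
      simp only [star_trivial]
      calc (0:ℝ) < c₁ * ∑ l, u l ^ 2 := mul_pos hc₁ hpos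
        _ ≤ u ⬝ᵥ A.mulVec u := this
  have hdet : IsUnit A.det := hpd.det_pos.ne'.isUnit
  -- the row of the inverse
  set u : Fin D → ℝ := fun ℓ => A⁻¹ k ℓ with hu
  have hsymminv : A⁻¹ᵀ = A⁻¹ := by
    rw [Matrix.transpose_nonsing_inv, (hsymm x).eq]
  have hAu : A.mulVec u = Pi.single k 1 := by
    have hcol : u = A⁻¹.mulVec (Pi.single k 1) := by
      funext ℓ
      rw [Matrix.mulVec_single]
      simp only [MulOpposite.op_one, one_smul]
      conv_rhs => rw [← hsymminv]
      rfl
    rw [hcol, Matrix.mulVec_mulVec, Matrix.mul_nonsing_inv A hdet, Matrix.one_mulVec]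
  set S : ℝ := ∑ ℓ, u ℓ ^ 2 with hS
  have hS0 : 0 ≤ S := Finset.sum_nonneg fun _ _ => sq_nonneg _
  have hcS : c₁ * S ≤ u k := by
    have := hlow x u
    rw [hAu] at this
    simpa [dotProduct_single] using this
  have huk : u k ≤ Real.sqrt S := by
    calc u k ≤ |u k| := le_abs_self _
      _ = Real.sqrt ((u k) ^ 2) := (Real.sqrt_sq_eq_abs _).symm
      _ ≤ Real.sqrt S :=
        Real.sqrt_le_sqrt (Finset.single_le_sum (f := fun ℓ => u ℓ ^ 2)
          (fun _ _ => sq_nonneg _) (Finset.mem_univ k))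
  have hsqrtS : Real.sqrt S ≤ 1 / c₁ := by
    have h1 : c₁ * S ≤ Real.sqrt S := le_trans hcS huk
    have h2 : Real.sqrt S ^ 2 = S := Real.sq_sqrt hS0
    rcases eq_or_lt_of_le (Real.sqrt_nonneg S) with h | h
    · rw [← h]; positivity
    · rw [le_div_iff₀ hc₁]
      have h3 : c₁ * (Real.sqrt S * Real.sqrt S) ≤ Real.sqrt S := by
        nlinarith
      nlinarith
  -- row sum of absolute values
  have hrow : ∑ ℓ, |u ℓ| ≤ Real.sqrt D / c₁ := by
    have hcs := Finset.sum_mul_sq_le_sq_mul_sq Finset.univ (fun ℓ => |u ℓ|) (fun _ => (1:ℝ))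
    simp only [mul_one, one_pow, sq_abs, Finset.sum_const, Finset.card_univ,
      Fintype.card_fin, nsmul_eq_mul] at hcs
    have hnn : 0 ≤ ∑ ℓ, |u ℓ| := Finset.sum_nonneg fun _ _ => abs_nonneg _
    have : (∑ ℓ, |u ℓ|) ≤ Real.sqrt (S * D) := by
      rw [← Real.sqrt_sq hnn]
      apply Real.sqrt_le_sqrt
      have h4 : (∑ ℓ, |u ℓ|) ^ 2 ≤ S * (D : ℝ) := by rw [hS]; exact_mod_cast hcs
      exact h4
    refine this.trans ?_
    rw [Real.sqrt_mul hS0]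
    calc Real.sqrt S * Real.sqrt D ≤ (1 / c₁) * Real.sqrt D :=
          mul_le_mul_of_nonneg_right hsqrtS (Real.sqrt_nonneg _)
      _ = Real.sqrt D / c₁ := by ring
  -- bound each pdg term
  have hterm : ∀ ℓ : Fin D,
      |pdg H ℓ j i x + pdg H i ℓ j x - pdg H i j ℓ x| ≤ 3 * L_H := by
    intro ℓ
    have h1 := pdg_abs_le H L_H hLH hlip ℓ j i x
    have h2 := pdg_abs_le H L_H hLH hlip i ℓ j x
    have h3 := pdg_abs_le H L_H hLH hlip i j ℓ x
    calc |pdg H ℓ j i x + pdg H i ℓ j x - pdg H i j ℓ x|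
        ≤ |pdg H ℓ j i x| + |pdg H i ℓ j x| + |pdg H i j ℓ x| := by
          apply (abs_sub _ _).trans
          gcongr
          exact abs_add_le _ _
      _ ≤ 3 * L_H := by linarith
  -- assemble
  rw [christoffel]
  rw [abs_mul]
  have habs : |∑ ℓ, (H x)⁻¹ k ℓ * (pdg H ℓ j i x + pdg H i ℓ j x - pdg H i j ℓ x)|
      ≤ ∑ ℓ, |u ℓ| * (3 * L_H) := by
    refine (Finset.abs_sum_le_sum_abs _ _).trans ?_
    apply Finset.sum_le_sum
    intro ℓ _
    rw [abs_mul]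
    exact mul_le_mul (le_refl _) (hterm ℓ) (abs_nonneg _) (abs_nonneg _)
  calc |(1:ℝ)/2| * |∑ ℓ, (H x)⁻¹ k ℓ * (pdg H ℓ j i x + pdg H i ℓ j x - pdg H i j ℓ x)|
      ≤ (1/2) * (∑ ℓ, |u ℓ| * (3 * L_H)) := by
        rw [abs_of_pos (by norm_num : (0:ℝ) < 1/2)]
        exact mul_le_mul_of_nonneg_left habs (by norm_num)
    _ = (3 * L_H / 2) * ∑ ℓ, |u ℓ| := by rw [← Finset.sum_mul]; ring
    _ ≤ (3 * L_H / 2) * (Real.sqrt D / c₁) :=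
        mul_le_mul_of_nonneg_left hrow (by positivity)
    _ = 3 * L_H * Real.sqrt D / (2 * c₁) := by ring
end
end

section
/- Let g be a Riemannian metric on R^D given by g_x(u,u) = u^⊤H(x)u with ‖H(x) − H(y)‖ ≤ L_H‖x − y‖₂ in operator norm. Let N ≥ 1, t_n = n/N, and let γᵖ : {t_0,...,t_N} → R^D be a sequence of points, with finite differences β(t_n) = N(γᵖ(t_{n+1}) − γᵖ(t_n)) and K₃² = (1/N)Σ_{n=0}^{N−1}‖β(t_n)‖₂². Let γᵖˡ : [0,1] → R^D be the piecewise linear interpolation of γᵖ. Then the energy E^g(γᵖˡ) = ∫₀¹ (γᵖˡ)'^⊤H(γᵖˡ)(γᵖˡ)' dt and the trapezoidal sum E_{tra,N}(γᵖ) = (1/N)Σ_n g_{(γᵖ(t_n)+γᵖ(t_{n+1}))/2}(β(t_n),β(t_n)) satisfy |E^g(γᵖˡ) − E_{tra,N}(γᵖ)| ≤ L_H K₃³ / (4 N^{1/2}). -/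
open MeasureTheory
open scoped RealInnerProductSpace

noncomputable section

/-- The piecewise linear interpolation of a sequence of points `γᵖ(tₙ)` (`tₙ = n/N`):
for `t = tₙ + s`, `0 ≤ s ≤ 1/N`, it equals `(1 − Ns) γᵖ(tₙ) + Ns γᵖ(t_{n+1})`. -/
def interp {D : ℕ} (N : ℕ) (γp : ℕ → EuclideanSpace ℝ (Fin D)) (t : ℝ) :
    EuclideanSpace ℝ (Fin D) :=
  (1 - (t * N - ⌊t * N⌋₊)) • γp ⌊t * N⌋₊ + (t * N - ⌊t * N⌋₊) • γp (⌊t * N⌋₊ + 1)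

lemma my_integral_abs_sub {a b c : ℝ} (hac : a ≤ c) (hcb : c ≤ b) :
    ∫ t in a..b, |t - c| = ((c - a) ^ 2 + (b - c) ^ 2) / 2 := by
  have hi : ∀ u v : ℝ, IntervalIntegrable (fun t => |t - c|) volume u v :=
    fun u v => (continuous_abs.comp (continuous_id.sub continuous_const)).intervalIntegrable u v
  rw [← intervalIntegral.integral_add_adjacent_intervals (hi a c) (hi c b)]
  have h1 : ∫ t in a..c, |t - c| = (c - a) ^ 2 / 2 := by
    rw [intervalIntegral.integral_congr (g := fun t => c - t)
      (fun t ht => ?_)]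
    · rw [intervalIntegral.integral_sub (intervalIntegrable_const) intervalIntegral.intervalIntegrable_id,
        intervalIntegral.integral_const, integral_id]
      simp [smul_eq_mul]; ring
    · rw [Set.uIcc_of_le hac] at ht
      rw [abs_of_nonpos (by linarith [ht.2])]; ring
  have h2 : ∫ t in c..b, |t - c| = (b - c) ^ 2 / 2 := by
    rw [intervalIntegral.integral_congr (g := fun t => t - c)
      (fun t ht => ?_)]
    · rw [intervalIntegral.integral_sub intervalIntegral.intervalIntegrable_id intervalIntegrable_const,
        intervalIntegral.integral_const, integral_id]
      simp [smul_eq_mul]; ring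
    · rw [Set.uIcc_of_le hcb] at ht
      rw [abs_of_nonneg (by linarith [ht.1])]
  rw [h1, h2]; ring

lemma my_sum_cube_le {n : ℕ} (f : ℕ → ℝ) (hf : ∀ i, 0 ≤ f i) :
    ∑ i ∈ Finset.range n, f i ^ 3 ≤
      Real.sqrt (∑ i ∈ Finset.range n, f i ^ 2) * ∑ i ∈ Finset.range n, f i ^ 2 := by
  set S := ∑ i ∈ Finset.range n, f i ^ 2 with hS
  have hS0 : 0 ≤ S := Finset.sum_nonneg fun i _ => sq_nonneg _
  have h4 : ∑ i ∈ Finset.range n, (f i ^ 2) ^ 2 ≤ S ^ 2 := by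
    rw [hS]
    exact Finset.sum_sq_le_sq_sum_of_nonneg fun i _ => sq_nonneg _
  have hcs := Finset.sum_mul_sq_le_sq_mul_sq (Finset.range n) f (fun i => f i ^ 2)
  have h3 : (∑ i ∈ Finset.range n, f i ^ 3) ^ 2 ≤ S ^ 2 * S := by
    calc (∑ i ∈ Finset.range n, f i ^ 3) ^ 2
        = (∑ i ∈ Finset.range n, f i * f i ^ 2) ^ 2 := by
          congr 1; exact Finset.sum_congr rfl fun i _ => by ring
      _ ≤ S * ∑ i ∈ Finset.range n, (f i ^ 2) ^ 2 := hcs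
      _ ≤ S * S ^ 2 := by exact mul_le_mul_of_nonneg_left h4 hS0
      _ = S ^ 2 * S := by ring
  have h0 : 0 ≤ ∑ i ∈ Finset.range n, f i ^ 3 :=
    Finset.sum_nonneg fun i _ => pow_nonneg (hf i) 3
  calc ∑ i ∈ Finset.range n, f i ^ 3 ≤ Real.sqrt (S ^ 2 * S) := by
        rw [Real.le_sqrt h0 (by positivity)]; exact h3
    _ = Real.sqrt S * S := by
        rw [Real.sqrt_mul (sq_nonneg S), Real.sqrt_sq hS0]; ring

/-- Error between the energy of the piecewise linear interpolation `γᵖˡ` of a point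
sequence `γᵖ` and the trapezoidal approximation of the energy:
`|E^g(γᵖˡ) − E_{tra,N}(γᵖ)| ≤ L_H K₃³ / (4 N^{1/2})`, where
`K₃² = (1/N) Σₙ ‖β(tₙ)‖²` and `β(tₙ) = N (γᵖ(t_{n+1}) − γᵖ(tₙ))`. -/
theorem interp_energy_trapezoidal_error (D N : ℕ) (hN : 1 ≤ N)
    (H : EuclideanSpace ℝ (Fin D) → EuclideanSpace ℝ (Fin D) →L[ℝ] EuclideanSpace ℝ (Fin D))
    (L_H : ℝ) (hLH : 0 < L_H)
    (hlip : ∀ x y, ‖H x - H y‖ ≤ L_H * ‖x - y‖)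
    (γp : ℕ → EuclideanSpace ℝ (Fin D)) (K₃ : ℝ) (hK₃ : 0 ≤ K₃)
    (hK₃sq : K₃ ^ 2 = (1 / N) * ∑ n ∈ Finset.range N,
      ‖(N : ℝ) • (γp (n + 1) - γp n)‖ ^ 2) :
    |(∫ t in (0:ℝ)..1, ⟪H (interp N γp t) (deriv (interp N γp) t), deriv (interp N γp) t⟫) -
        (1 / N) * ∑ n ∈ Finset.range N,
          ⟪H ((2:ℝ)⁻¹ • (γp n + γp (n + 1))) ((N : ℝ) • (γp (n + 1) - γp n)),
            (N : ℝ) • (γp (n + 1) - γp n)⟫| ≤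
      L_H * K₃ ^ 3 / (4 * Real.sqrt N) := by
  have hN0 : (0:ℝ) < N := by exact_mod_cast hN
  set e : ℕ → EuclideanSpace ℝ (Fin D) := fun n => γp (n + 1) - γp n with he
  set β : ℕ → EuclideanSpace ℝ (Fin D) := fun n => (N : ℝ) • (γp (n + 1) - γp n) with hβ
  set m : ℕ → EuclideanSpace ℝ (Fin D) := fun n => (2:ℝ)⁻¹ • (γp n + γp (n + 1)) with hm
  set g : ℕ → ℝ → EuclideanSpace ℝ (Fin D) := fun n t => γp n + (t * N - n) • e n with hg
  set F : ℝ → ℝ := fun t =>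
    ⟪H (interp N γp t) (deriv (interp N γp) t), deriv (interp N γp) t⟫ with hF
  set G : ℕ → ℝ → ℝ := fun n t => ⟪H (g n t) (β n), β n⟫ with hG
  set c : ℕ → ℝ := fun n => ⟪H (m n) (β n), β n⟫ with hc
  have hβe : ∀ n, β n = (N : ℝ) • e n := fun n => rfl
  have hβnorm : ∀ n, ‖β n‖ = N * ‖e n‖ := by
    intro n; rw [hβe, norm_smul, Real.norm_natCast]
  -- floor identity
  have hfloor : ∀ n : ℕ, ∀ t ∈ Set.Ioo ((n:ℝ)/N) (((n:ℝ)+1)/N), ⌊t * N⌋₊ = n := by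
    intro n t ht
    have h1 : (n:ℝ) < t * N := by
      have := (div_lt_iff₀ hN0).mp ht.1; linarith
    have h2 : t * N < (n:ℝ) + 1 := by
      have := (lt_div_iff₀ hN0).mp ht.2; linarith
    have h0 : (0:ℝ) ≤ t * N := le_trans (Nat.cast_nonneg n) h1.le
    rw [Nat.floor_eq_iff h0]
    exact ⟨h1.le, by exact_mod_cast h2⟩
  -- interp equals the affine map on each open piece
  have hinterp_eq : ∀ n : ℕ, ∀ t ∈ Set.Ioo ((n:ℝ)/N) (((n:ℝ)+1)/N),
      interp N γp t = g n t := by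
    intro n t ht
    show (1 - (t * N - ⌊t * N⌋₊)) • γp ⌊t * N⌋₊ + (t * N - ⌊t * N⌋₊) • γp (⌊t * N⌋₊ + 1)
        = γp n + (t * N - n) • e n
    rw [hfloor n t ht, he]
    module
  -- derivative on each open piece
  have hgderiv : ∀ n : ℕ, ∀ t : ℝ, HasDerivAt (g n) (β n) t := by
    intro n t
    have h1 : HasDerivAt (fun s : ℝ => s * (N:ℝ) - (n:ℝ)) (N:ℝ) t :=
      (hasDerivAt_mul_const (N:ℝ)).sub_const _
    have h2 := (h1.smul_const (e n)).const_add (γp n)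
    rw [hβe]; exact h2
  have hderiv : ∀ n : ℕ, ∀ t ∈ Set.Ioo ((n:ℝ)/N) (((n:ℝ)+1)/N),
      deriv (interp N γp) t = β n := by
    intro n t ht
    have heq : interp N γp =ᶠ[nhds t] g n :=
      Filter.eventuallyEq_of_mem (Ioo_mem_nhds ht.1 ht.2) (fun s hs => hinterp_eq n s hs)
    rw [heq.deriv_eq, (hgderiv n t).deriv]
  -- continuity facts
  have hHcont : Continuous H := by
    have : LipschitzWith (Real.toNNReal L_H) H := by
      apply LipschitzWith.of_dist_le_mul
      intro x y
      rw [dist_eq_norm, dist_eq_norm]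
      calc ‖H x - H y‖ ≤ L_H * ‖x - y‖ := hlip x y
        _ = (Real.toNNReal L_H : ℝ) * ‖x - y‖ := by rw [Real.coe_toNNReal _ hLH.le]
    exact this.continuous
  have hgcont : ∀ n, Continuous (g n) :=
    fun n => continuous_const.add
      (((continuous_id.mul continuous_const).sub continuous_const).smul continuous_const)
  have hGcont : ∀ n, Continuous (G n) := fun n =>
    (((hHcont.comp (hgcont n)).clm_apply continuous_const)).inner continuous_const
  -- a.e. equality of F and G n on each piece
  have hle : ∀ n : ℕ, (n:ℝ)/N ≤ ((n:ℝ)+1)/N := by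
    intro n
    gcongr
    linarith
  -- a.e. equality of F and G n on each piece
  have haeeq : ∀ n : ℕ, ∀ᵐ t ∂(volume : Measure ℝ),
      t ∈ Set.uIoc ((n:ℝ)/N) (((n:ℝ)+1)/N) → F t = G n t := by
    intro n
    have hb : (volume : Measure ℝ) {(((n:ℝ)+1)/N)} = 0 := measure_singleton _
    filter_upwards [compl_mem_ae_iff.mpr hb] with t ht htm
    rw [Set.uIoc_of_le (hle n)] at htm
    have htoo : t ∈ Set.Ioo ((n:ℝ)/N) (((n:ℝ)+1)/N) :=
      ⟨htm.1, lt_of_le_of_ne htm.2 (by simpa using ht)⟩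
    simp only [hF, hG]
    rw [hderiv n t htoo, hinterp_eq n t htoo]
  have hFint : ∀ n : ℕ, IntervalIntegrable F volume ((n:ℝ)/N) (((n:ℝ)+1)/N) := by
    intro n
    refine ((hGcont n).intervalIntegrable _ _).congr_ae ?_
    exact (ae_restrict_iff' measurableSet_uIoc).mpr ((haeeq n).mono fun t h ht => (h ht).symm)
  have hFG : ∀ n : ℕ, (∫ t in ((n:ℝ)/N)..(((n:ℝ)+1)/N), F t)
      = ∫ t in ((n:ℝ)/N)..(((n:ℝ)+1)/N), G n t :=
    fun n => intervalIntegral.integral_congr_ae (haeeq n)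
  -- splitting the integral
  have hsplit : (∫ t in (0:ℝ)..1, F t)
      = ∑ n ∈ Finset.range N, ∫ t in ((n:ℝ)/N)..(((n:ℝ)+1)/N), F t := by
    have ha : ∀ i < N, IntervalIntegrable F volume
        ((fun i : ℕ => (i:ℝ)/N) i) ((fun i : ℕ => (i:ℝ)/N) (i+1)) := by
      intro i _
      have := hFint i
      simpa using this
    have h := intervalIntegral.sum_integral_adjacent_intervals
      (a := fun i : ℕ => (i:ℝ)/N) (μ := volume) (f := F) ha
    simp only [Nat.cast_zero, Nat.cast_add, Nat.cast_one, zero_div, div_self hN0.ne'] at h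
    rw [← h]
  -- the per-piece estimate
  have hpiece : ∀ n ∈ Finset.range N,
      |(∫ t in ((n:ℝ)/N)..(((n:ℝ)+1)/N), F t) - (1/N) * c n|
        ≤ L_H * ‖β n‖^3 / (4 * N^2) := by
    intro n _
    rw [hFG n]
    have hconst : (1/(N:ℝ)) * c n = ∫ t in ((n:ℝ)/N)..(((n:ℝ)+1)/N), c n := by
      rw [intervalIntegral.integral_const, smul_eq_mul]
      congr 1
      field_simp
      ring
    rw [hconst, ← intervalIntegral.integral_sub ((hGcont n).intervalIntegrable _ _)
      intervalIntegrable_const]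
    set cc : ℝ := ((n:ℝ) + 2⁻¹)/N with hcc
    have hcc1 : (n:ℝ)/N ≤ cc := by rw [hcc]; gcongr; norm_num
    have hcc2 : cc ≤ ((n:ℝ)+1)/N := by rw [hcc]; gcongr; norm_num
    have hdiff : ∀ t : ℝ, |G n t - c n| ≤ (L_H * ‖β n‖^2 * ‖e n‖ * N) * |t - cc| := by
      intro t
      have h1 : G n t - c n = ⟪(H (g n t) - H (m n)) (β n), β n⟫ := by
        simp [hG, hc, ContinuousLinearMap.sub_apply, inner_sub_left]
      have h2 : g n t - m n = (t * N - n - 2⁻¹) • e n := by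
        simp only [hg, hm, he]
        module
      have h3 : |t * (N:ℝ) - n - 2⁻¹| = N * |t - cc| := by
        have hx : t * (N:ℝ) - n - 2⁻¹ = N * (t - cc) := by rw [hcc]; field_simp; ring
        rw [hx, abs_mul, abs_of_pos hN0]
      have hlipn := hlip (g n t) (m n)
      calc |G n t - c n| = |⟪(H (g n t) - H (m n)) (β n), β n⟫| := by rw [h1]
        _ ≤ ‖(H (g n t) - H (m n)) (β n)‖ * ‖β n‖ := abs_real_inner_le_norm _ _
        _ ≤ ‖H (g n t) - H (m n)‖ * ‖β n‖ * ‖β n‖ := by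
            gcongr
            exact ContinuousLinearMap.le_opNorm _ _
        _ ≤ (L_H * ‖g n t - m n‖) * ‖β n‖ * ‖β n‖ := by gcongr
        _ = L_H * ‖β n‖^2 * ‖g n t - m n‖ := by ring
        _ = L_H * ‖β n‖^2 * (|t * N - n - 2⁻¹| * ‖e n‖) := by
            rw [h2]; simp [norm_smul]
        _ = (L_H * ‖β n‖^2 * ‖e n‖ * N) * |t - cc| := by rw [h3]; ring
    have hval : ∫ t in ((n:ℝ)/N)..(((n:ℝ)+1)/N), |t - cc| = 1/(4*N^2) := by
      rw [my_integral_abs_sub hcc1 hcc2, hcc]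
      field_simp
      ring
    calc |∫ t in ((n:ℝ)/N)..(((n:ℝ)+1)/N), (G n t - c n)|
        ≤ ∫ t in ((n:ℝ)/N)..(((n:ℝ)+1)/N), |G n t - c n| :=
          intervalIntegral.abs_integral_le_integral_abs (hle n)
      _ ≤ ∫ t in ((n:ℝ)/N)..(((n:ℝ)+1)/N), (L_H * ‖β n‖^2 * ‖e n‖ * N) * |t - cc| := by
          apply intervalIntegral.integral_mono_on (hle n)
          · exact (((hGcont n).sub continuous_const).abs).intervalIntegrable _ _
          · exact (continuous_const.mul ((continuous_id.sub continuous_const).abs)).intervalIntegrable _ _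
          · intro x _; exact hdiff x
      _ = (L_H * ‖β n‖^2 * ‖e n‖ * N) * ∫ t in ((n:ℝ)/N)..(((n:ℝ)+1)/N), |t - cc| :=
          intervalIntegral.integral_const_mul _ _
      _ = L_H * ‖β n‖^3 / (4 * N^2) := by
          rw [hval, hβnorm n]
          ring
  -- assembling
  have habs : 0 ≤ L_H / (4 * (N:ℝ)^2) := by positivity
  calc |(∫ t in (0:ℝ)..1, F t) - (1/N) * ∑ n ∈ Finset.range N, c n|
      = |∑ n ∈ Finset.range N,
          ((∫ t in ((n:ℝ)/N)..(((n:ℝ)+1)/N), F t) - (1/N) * c n)| := by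
        rw [hsplit, Finset.mul_sum, Finset.sum_sub_distrib]
    _ ≤ ∑ n ∈ Finset.range N,
          |(∫ t in ((n:ℝ)/N)..(((n:ℝ)+1)/N), F t) - (1/N) * c n| :=
        Finset.abs_sum_le_sum_abs _ _
    _ ≤ ∑ n ∈ Finset.range N, L_H * ‖β n‖^3 / (4 * N^2) := Finset.sum_le_sum hpiece
    _ = L_H / (4 * N^2) * ∑ n ∈ Finset.range N, ‖β n‖^3 := by
        rw [Finset.mul_sum]
        exact Finset.sum_congr rfl fun n _ => by ring
    _ ≤ L_H / (4 * N^2) * (Real.sqrt (∑ n ∈ Finset.range N, ‖β n‖^2)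
          * ∑ n ∈ Finset.range N, ‖β n‖^2) :=
        mul_le_mul_of_nonneg_left (my_sum_cube_le _ (fun i => norm_nonneg _)) habs
    _ = L_H * K₃^3 / (4 * Real.sqrt N) := by
        have hS : ∑ n ∈ Finset.range N, ‖β n‖^2 = N * K₃^2 := by
          simp only [hβ, hK₃sq]
          field_simp
        rw [hS, Real.sqrt_mul hN0.le, Real.sqrt_sq hK₃]
        have hsq : Real.sqrt N * Real.sqrt N = (N:ℝ) := Real.mul_self_sqrt hN0.le
        have hsqpos : 0 < Real.sqrt N := Real.sqrt_pos.mpr hN0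
        rw [div_mul_eq_mul_div, div_eq_div_iff (by positivity) (by positivity)]
        linear_combination (4 * L_H * K₃^3 * (N:ℝ)) * hsq
end
end

section
/- Let g be a Riemannian metric on R^D given by g_x(u,u) = u^⊤H(x)u with ‖H(x) − H(y)‖ ≤ L_H‖x − y‖₂ in operator norm. Let N ≥ 1, t_n = n/N, γᵖ a sequence of points, β(t_n) = N(γᵖ(t_{n+1}) − γᵖ(t_n)), K₃² = (1/N)Σ_n‖β(t_n)‖₂², and γᵖˡ the piecewise linear interpolation of γᵖ. Then the energy of the interpolation and the left-endpoint approximation E_{l,N}(γᵖ) = (1/N)Σ_n g_{γᵖ(t_n)}(β(t_n),β(t_n)) satisfy |E^g(γᵖˡ) − E_{l,N}(γᵖ)| ≤ L_H K₃³ / (2 N^{1/2}). -/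
open MeasureTheory
open scoped RealInnerProductSpace

noncomputable section

namespace InterpProof

variable {D : ℕ}

lemma interp_eq_lin {N n : ℕ} (γp : ℕ → EuclideanSpace ℝ (Fin D)) (hNpos : 0 < N)
    {t : ℝ} (ht : t ∈ Set.Ioo ((n : ℝ) / N) (((n : ℝ) + 1) / N)) :
    interp N γp t = γp n + (t * N - n) • (γp (n + 1) - γp n) := by
  have hNR : (0 : ℝ) < N := by exact_mod_cast hNpos
  have h1 : (n : ℝ) < t * N := (div_lt_iff₀ hNR).mp ht.1
  have h2 : t * N < (n : ℝ) + 1 := (lt_div_iff₀ hNR).mp ht.2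
  have hfl : ⌊t * N⌋₊ = n :=
    (Nat.floor_eq_iff ((Nat.cast_nonneg n).trans h1.le)).mpr ⟨h1.le, h2⟩
  unfold interp
  rw [hfl]
  simp only [smul_sub, sub_smul, one_smul]
  abel

lemma deriv_interp {N n : ℕ} (γp : ℕ → EuclideanSpace ℝ (Fin D)) (hNpos : 0 < N)
    {t : ℝ} (ht : t ∈ Set.Ioo ((n : ℝ) / N) (((n : ℝ) + 1) / N)) :
    deriv (interp N γp) t = (N : ℝ) • (γp (n + 1) - γp n) := by
  have heq : interp N γp =ᶠ[nhds t]
      (fun s => γp n + (s * N - n) • (γp (n + 1) - γp n)) :=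
    Filter.eventuallyEq_of_mem (isOpen_Ioo.mem_nhds ht)
      (fun s hs => interp_eq_lin γp hNpos hs)
  rw [heq.deriv_eq]
  have h1 : HasDerivAt (fun s : ℝ => s * N - n) (N : ℝ) t := by
    simpa using ((hasDerivAt_id t).mul_const (N : ℝ)).sub_const (n : ℝ)
  exact ((h1.smul_const (γp (n + 1) - γp n)).const_add _).deriv


lemma step (N : ℕ) (hN : 0 < N)
    (H : EuclideanSpace ℝ (Fin D) → EuclideanSpace ℝ (Fin D) →L[ℝ] EuclideanSpace ℝ (Fin D))
    (L_H : ℝ) (hLH : 0 < L_H)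
    (hlip : ∀ x y, ‖H x - H y‖ ≤ L_H * ‖x - y‖)
    (γp : ℕ → EuclideanSpace ℝ (Fin D)) (n : ℕ) :
    |(∫ t in ((n : ℝ) / N)..(((n : ℝ) + 1) / N),
        ⟪H (interp N γp t) (deriv (interp N γp) t), deriv (interp N γp) t⟫) -
      (1 / N) * ⟪H (γp n) ((N : ℝ) • (γp (n + 1) - γp n)), (N : ℝ) • (γp (n + 1) - γp n)⟫| ≤
    L_H * ‖(N : ℝ) • (γp (n + 1) - γp n)‖ ^ 3 / (2 * N ^ 2) := by
  have hNR : (0 : ℝ) < N := by exact_mod_cast hN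
  set a : ℝ := (n : ℝ) / N with ha
  set b : ℝ := ((n : ℝ) + 1) / N with hb
  have hab : a ≤ b := by
    rw [ha, hb, div_le_div_iff_of_pos_right hNR]; linarith
  set d : EuclideanSpace ℝ (Fin D) := γp (n + 1) - γp n with hd
  set β : EuclideanSpace ℝ (Fin D) := (N : ℝ) • d with hβ
  set c : ℝ → EuclideanSpace ℝ (Fin D) := fun t => γp n + (t * N - n) • d with hc
  set F : ℝ → ℝ := fun t => ⟪H (c t) β, β⟫ with hF
  set C : ℝ := ⟪H (γp n) β, β⟫ with hC
  -- continuity facts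
  have hHcont : Continuous H := by
    refine (LipschitzWith.of_dist_le_mul (K := ⟨L_H, hLH.le⟩) (f := H) ?_).continuous
    intro x y
    rw [dist_eq_norm, dist_eq_norm]
    exact hlip x y
  have hccont : Continuous c := by
    apply continuous_const.add
    exact (((continuous_id.mul continuous_const).sub continuous_const).smul continuous_const)
  have hFcont : Continuous F := ((hHcont.comp hccont).clm_apply continuous_const).inner continuous_const
  -- a.e. equality of the integrand with F on [a,b]
  have hbne : ∀ᵐ t : ℝ, t ≠ b := by
    rw [MeasureTheory.ae_iff]
    have : {t : ℝ | ¬ t ≠ b} = {b} := by ext t; simp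
    rw [this]; exact measure_singleton b
  have hcongr : ∀ᵐ t : ℝ, t ∈ Set.uIoc a b →
      ⟪H (interp N γp t) (deriv (interp N γp) t), deriv (interp N γp) t⟫ = F t := by
    filter_upwards [hbne] with t htb hmem
    rw [Set.uIoc_of_le hab] at hmem
    have htIoo : t ∈ Set.Ioo a b := ⟨hmem.1, lt_of_le_of_ne hmem.2 htb⟩
    rw [interp_eq_lin γp hN htIoo, deriv_interp γp hN htIoo]
  -- rewrite the interval integral
  have hint : (∫ t in a..b,
      ⟪H (interp N γp t) (deriv (interp N γp) t), deriv (interp N γp) t⟫) = ∫ t in a..b, F t :=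
    intervalIntegral.integral_congr_ae hcongr
  rw [hint]
  -- constant as an integral
  have hba : b - a = 1 / N := by rw [ha, hb]; field_simp; ring
  have hconst : (1 / (N : ℝ)) * C = ∫ _ in a..b, C := by
    rw [intervalIntegral.integral_const, smul_eq_mul, hba]
  rw [hconst, ← intervalIntegral.integral_sub (hFcont.intervalIntegrable a b)
    intervalIntegrable_const]
  -- pointwise bound
  have hbound : ∀ t ∈ Set.uIoc a b, |F t - C| ≤ (t * N - n) * (L_H * ‖d‖ * (‖β‖ * ‖β‖)) := by
    intro t hmem
    rw [Set.uIoc_of_le hab] at hmem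
    have htn : (n : ℝ) ≤ t * N := by
      have := hmem.1; rw [ha, div_lt_iff₀ hNR] at this; linarith
    have hdiff : F t - C = ⟪(H (c t) - H (γp n)) β, β⟫ := by
      rw [hF, hC, ContinuousLinearMap.sub_apply, inner_sub_left]
    rw [hdiff]
    calc |⟪(H (c t) - H (γp n)) β, β⟫| ≤ ‖(H (c t) - H (γp n)) β‖ * ‖β‖ :=
          abs_real_inner_le_norm _ _
      _ ≤ (‖H (c t) - H (γp n)‖ * ‖β‖) * ‖β‖ :=
          mul_le_mul_of_nonneg_right (ContinuousLinearMap.le_opNorm _ _) (norm_nonneg _)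
      _ ≤ ((L_H * ‖c t - γp n‖) * ‖β‖) * ‖β‖ := by
          have := hlip (c t) (γp n)
          gcongr
      _ = (t * N - n) * (L_H * ‖d‖ * (‖β‖ * ‖β‖)) := by
          have : ‖c t - γp n‖ = (t * N - n) * ‖d‖ := by
            rw [hc]; simp only [add_sub_cancel_left, norm_smul, Real.norm_eq_abs,
              abs_of_nonneg (sub_nonneg.mpr htn)]
          rw [this]; ring
  -- the bound integral
  have hbint : (∫ t in a..b, (t * N - n) * (L_H * ‖d‖ * (‖β‖ * ‖β‖)))
      = (1 / (2 * N)) * (L_H * ‖d‖ * (‖β‖ * ‖β‖)) := by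
    rw [intervalIntegral.integral_mul_const]
    have : (∫ t in a..b, (t * N - (n : ℝ))) = 1 / (2 * N) := by
      have h1 : IntervalIntegrable (fun t : ℝ => t * N) volume a b :=
        (by fun_prop : Continuous fun t : ℝ => t * (N : ℝ)).intervalIntegrable a b
      rw [intervalIntegral.integral_sub h1 intervalIntegrable_const,
        intervalIntegral.integral_mul_const, integral_id,
        intervalIntegral.integral_const, smul_eq_mul, ha, hb]
      field_simp
      ring
    rw [this]
  have hmain : |∫ t in a..b, (F t - C)| ≤ (1 / (2 * N)) * (L_H * ‖d‖ * (‖β‖ * ‖β‖)) := by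
    have h1 : ‖∫ t in a..b, (F t - C)‖ ≤
        |∫ t in a..b, (t * N - n) * (L_H * ‖d‖ * (‖β‖ * ‖β‖))| := by
      apply intervalIntegral.norm_integral_le_abs_of_norm_le
      · rw [ae_restrict_iff' measurableSet_uIoc]
        filter_upwards with t ht
        simpa [Real.norm_eq_abs] using hbound t ht
      · exact (by fun_prop : Continuous fun t : ℝ =>
          (t * N - n) * (L_H * ‖d‖ * (‖β‖ * ‖β‖))).intervalIntegrable a b
    rw [hbint] at h1
    calc |∫ t in a..b, (F t - C)| ≤ |(1 / (2 * N)) * (L_H * ‖d‖ * (‖β‖ * ‖β‖))| := h1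
      _ = (1 / (2 * N)) * (L_H * ‖d‖ * (‖β‖ * ‖β‖)) := by
          apply abs_of_nonneg; positivity
  refine hmain.trans (le_of_eq ?_)
  have hβd : ‖β‖ = N * ‖d‖ := by
    rw [hβ, norm_smul, Real.norm_eq_abs, abs_of_nonneg hNR.le]
  rw [hβd]
  field_simp


-- integrability of the integrand on each subinterval
lemma integrable_step (N : ℕ) (hN : 0 < N)
    (H : EuclideanSpace ℝ (Fin D) → EuclideanSpace ℝ (Fin D) →L[ℝ] EuclideanSpace ℝ (Fin D))
    (L_H : ℝ) (hLH : 0 < L_H)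
    (hlip : ∀ x y, ‖H x - H y‖ ≤ L_H * ‖x - y‖)
    (γp : ℕ → EuclideanSpace ℝ (Fin D)) (n : ℕ) :
    IntervalIntegrable (fun t =>
        ⟪H (interp N γp t) (deriv (interp N γp) t), deriv (interp N γp) t⟫)
      volume ((n : ℝ) / N) (((n : ℝ) + 1) / N) := by
  have hNR : (0 : ℝ) < N := by exact_mod_cast hN
  set a : ℝ := (n : ℝ) / N with ha
  set b : ℝ := ((n : ℝ) + 1) / N with hb
  have hab : a ≤ b := by
    rw [ha, hb, div_le_div_iff_of_pos_right hNR]; linarith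
  set d : EuclideanSpace ℝ (Fin D) := γp (n + 1) - γp n with hd
  set β : EuclideanSpace ℝ (Fin D) := (N : ℝ) • d with hβ
  set F : ℝ → ℝ := fun t => ⟪H (γp n + (t * N - n) • d) β, β⟫ with hF
  have hHcont : Continuous H := by
    refine (LipschitzWith.of_dist_le_mul (K := ⟨L_H, hLH.le⟩) (f := H) ?_).continuous
    intro x y
    rw [dist_eq_norm, dist_eq_norm]
    exact hlip x y
  have hccont : Continuous fun t : ℝ => γp n + (t * N - n) • d := by
    apply continuous_const.add
    exact (((continuous_id.mul continuous_const).sub continuous_const).smul continuous_const)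
  have hFcont : Continuous F :=
    ((hHcont.comp hccont).clm_apply continuous_const).inner continuous_const
  rw [intervalIntegrable_iff_integrableOn_Ioc_of_le hab]
  have hFint : IntegrableOn F (Set.Ioc a b) volume :=
    (intervalIntegrable_iff_integrableOn_Ioc_of_le hab).mp (hFcont.intervalIntegrable a b)
  refine hFint.congr ?_
  refine (ae_restrict_iff' measurableSet_Ioc).mpr ?_
  have hbne : ∀ᵐ t : ℝ, t ≠ b := by
    rw [MeasureTheory.ae_iff]
    have : {t : ℝ | ¬ t ≠ b} = {b} := by ext t; simp
    rw [this]; exact measure_singleton b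
  filter_upwards [hbne] with t htb hmem
  have htIoo : t ∈ Set.Ioo a b := ⟨hmem.1, lt_of_le_of_ne hmem.2 htb⟩
  show F t = _
  rw [interp_eq_lin γp hN htIoo, deriv_interp γp hN htIoo]

end InterpProof

/-- Error between the energy of the piecewise linear interpolation `γᵖˡ` of a point
sequence `γᵖ` and the left-endpoint approximation of the energy:
`|E^g(γᵖˡ) − E_{l,N}(γᵖ)| ≤ L_H K₃³ / (2 N^{1/2})`, where
`K₃² = (1/N) Σₙ ‖β(tₙ)‖²` and `β(tₙ) = N (γᵖ(t_{n+1}) − γᵖ(tₙ))`. -/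
theorem interp_energy_left_error (D N : ℕ) (hN : 1 ≤ N)
    (H : EuclideanSpace ℝ (Fin D) → EuclideanSpace ℝ (Fin D) →L[ℝ] EuclideanSpace ℝ (Fin D))
    (L_H : ℝ) (hLH : 0 < L_H)
    (hlip : ∀ x y, ‖H x - H y‖ ≤ L_H * ‖x - y‖)
    (γp : ℕ → EuclideanSpace ℝ (Fin D)) (K₃ : ℝ) (hK₃ : 0 ≤ K₃)
    (hK₃sq : K₃ ^ 2 = (1 / N) * ∑ n ∈ Finset.range N,
      ‖(N : ℝ) • (γp (n + 1) - γp n)‖ ^ 2) :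
    |(∫ t in (0:ℝ)..1, ⟪H (interp N γp t) (deriv (interp N γp) t), deriv (interp N γp) t⟫) -
        (1 / N) * ∑ n ∈ Finset.range N,
          ⟪H (γp n) ((N : ℝ) • (γp (n + 1) - γp n)), (N : ℝ) • (γp (n + 1) - γp n)⟫| ≤
      L_H * K₃ ^ 3 / (2 * Real.sqrt N) := by
  have hN0 : 0 < N := hN
  have hNR : (0 : ℝ) < N := by exact_mod_cast hN0
  set g : ℝ → ℝ := fun t =>
    ⟪H (interp N γp t) (deriv (interp N γp) t), deriv (interp N γp) t⟫ with hg
  set β : ℕ → EuclideanSpace ℝ (Fin D) := fun n => (N : ℝ) • (γp (n + 1) - γp n) with hβ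
  -- split the integral
  have hsplit : (∫ t in (0:ℝ)..1, g t) =
      ∑ k ∈ Finset.range N, ∫ t in ((k : ℝ) / N)..(((k : ℝ) + 1) / N), g t := by
    have key := intervalIntegral.sum_integral_adjacent_intervals (μ := volume) (f := g)
      (a := fun k : ℕ => (k : ℝ) / N) (n := N) (fun k _ => by
        have := InterpProof.integrable_step N hN0 H L_H hLH hlip γp k
        simpa [Nat.cast_add, Nat.cast_one, add_div] using this)
    simp only [Nat.cast_zero, zero_div, Nat.cast_add, Nat.cast_one] at key
    rw [div_self hNR.ne'] at key
    exact key.symm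
  rw [hsplit, Finset.mul_sum, ← Finset.sum_sub_distrib]
  -- triangle inequality + per-interval bound
  have hsum : |∑ k ∈ Finset.range N,
      ((∫ t in ((k : ℝ) / N)..(((k : ℝ) + 1) / N), g t) - (1 / N) * ⟪H (γp k) (β k), β k⟫)| ≤
      ∑ k ∈ Finset.range N, L_H * ‖β k‖ ^ 3 / (2 * N ^ 2) := by
    refine (Finset.abs_sum_le_sum_abs _ _).trans (Finset.sum_le_sum fun k _ => ?_)
    exact InterpProof.step N hN0 H L_H hLH hlip γp k
  refine hsum.trans ?_
  -- sum of cubes bound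
  set S : ℝ := ∑ n ∈ Finset.range N, ‖β n‖ ^ 2 with hS
  have hS0 : 0 ≤ S := Finset.sum_nonneg fun n _ => sq_nonneg _
  have hSN : S = N * K₃ ^ 2 := by
    rw [hK₃sq]; field_simp
  have hcube : ∑ k ∈ Finset.range N, ‖β k‖ ^ 3 ≤ Real.sqrt S * S := by
    have : ∀ k ∈ Finset.range N, ‖β k‖ ^ 3 ≤ Real.sqrt S * ‖β k‖ ^ 2 := by
      intro k hk
      have hle : ‖β k‖ ≤ Real.sqrt S := by
        rw [show ‖β k‖ = Real.sqrt (‖β k‖ ^ 2) from (Real.sqrt_sq (norm_nonneg _)).symm]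
        apply Real.sqrt_le_sqrt
        exact Finset.single_le_sum (f := fun n => ‖β n‖ ^ 2) (fun n _ => sq_nonneg _) hk
      calc ‖β k‖ ^ 3 = ‖β k‖ * ‖β k‖ ^ 2 := by ring
        _ ≤ Real.sqrt S * ‖β k‖ ^ 2 := by
            apply mul_le_mul_of_nonneg_right hle (sq_nonneg _)
    calc ∑ k ∈ Finset.range N, ‖β k‖ ^ 3 ≤ ∑ k ∈ Finset.range N, Real.sqrt S * ‖β k‖ ^ 2 :=
          Finset.sum_le_sum this
      _ = Real.sqrt S * S := by rw [← Finset.mul_sum]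
  have hsqrtS : Real.sqrt S = Real.sqrt N * K₃ := by
    rw [hSN, Real.sqrt_mul (Nat.cast_nonneg N), Real.sqrt_sq hK₃]
  calc ∑ k ∈ Finset.range N, L_H * ‖β k‖ ^ 3 / (2 * N ^ 2)
      = (L_H / (2 * N ^ 2)) * ∑ k ∈ Finset.range N, ‖β k‖ ^ 3 := by
        rw [Finset.mul_sum]; apply Finset.sum_congr rfl; intros; ring
    _ ≤ (L_H / (2 * N ^ 2)) * (Real.sqrt S * S) := by
        apply mul_le_mul_of_nonneg_left hcube (by positivity)
    _ = L_H * K₃ ^ 3 / (2 * Real.sqrt N) := by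
        rw [hsqrtS, hSN]
        have hs : Real.sqrt (N:ℝ) * Real.sqrt N = N := Real.mul_self_sqrt (Nat.cast_nonneg N)
        have hs0 : (0:ℝ) < Real.sqrt N := Real.sqrt_pos.mpr hNR
        set s : ℝ := Real.sqrt N with hsdef
        have hsne : s ≠ 0 := hs0.ne'
        rw [show ((N:ℝ)) = s * s from hs.symm]
        field_simp


end
end
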